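/- arXiv:2002.06582 — 3 statements merged into one kernel-verified Lean document; each statement's English description precedes it below -/
import Mathlib

section
/- Let n ≥ 1 and s ∈ (0,1). Set ⟨x⟩ = (1 + (|x| - 1)^4)^{1/4} for x ∈ ℝⁿ, and define φ : ℝⁿ → ℝ by φ(x) = 1 if |x| ≤ 1 and φ(x) = ⟨x⟩^{-n-2s} if |x| ≥ 1. Then there exists a constant C > 0 (depending only on n and s) such that for every x ∈ ℝⁿ with |x| ≤ 2, ∫_{ℝⁿ} |φ(x+y) + φ(x-y) - 2φ(x)| / |y|^{n+2s} dy ≤ C (in particular the integral converges). -/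
open MeasureTheory Real Set

/-- The Japanese-bracket-type weight `⟨x⟩ = (1 + (|x| - 1)^4)^{1/4}`. -/
noncomputable def jbr {n : ℕ} (x : EuclideanSpace ℝ (Fin n)) : ℝ :=
  (1 + (‖x‖ - 1) ^ 4) ^ ((1 : ℝ) / 4)

/-- The test function `φ(x) = 1` if `|x| ≤ 1`, `φ(x) = ⟨x⟩^{-n-2s}` if `|x| ≥ 1`. -/
noncomputable def phi (n : ℕ) (s : ℝ) (x : EuclideanSpace ℝ (Fin n)) : ℝ :=
  if ‖x‖ ≤ 1 then 1 else jbr x ^ (-((n : ℝ) + 2 * s))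

/-! `φ` is a smooth function of `max (‖x‖ - 1) 0 ^ 4`, hence `C²` (near the origin, where the norm
is not smooth, it is locally constant). A `C²` function has second differences
`|φ(x+y) + φ(x-y) - 2φ(x)| ≤ M‖y‖²` on bounded sets, by the mean value theorem applied to
`t ↦ φ(x+ty) + φ(x-ty)` and the Lipschitz bound on `Dφ`; and since `0 ≤ φ ≤ 1` they are also at
most `2`. So the integrand is dominated by `M‖y‖^(2-n-2s)` on the unit ball, integrable since
`s < 1`, and by `2^(1+n+2s) (1+‖y‖)^(-n-2s)` outside it, integrable since `s > 0`. -/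

open Filter Topology Module
open scoped NNReal

theorem hasDerivAt_max_zero_pow (k : ℕ) (t : ℝ) :
    HasDerivAt (fun t : ℝ => max t 0 ^ (k + 2)) ((k + 2 : ℝ) * max t 0 ^ (k + 1)) t := by
  refine hasDerivAt_of_hasDerivAt_of_ne' (f := fun t : ℝ => max t 0 ^ (k + 2))
    (g := fun t : ℝ => (k + 2 : ℝ) * max t 0 ^ (k + 1)) (x := 0) (fun u hu => ?_)
    (by fun_prop) (by fun_prop) t
  rcases hu.lt_or_gt with hu | hu
  · have h : (fun t : ℝ => max t 0 ^ (k + 2)) =ᶠ[𝓝 u] fun _ => 0 := by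
      filter_upwards [eventually_lt_nhds hu] with v hv
      simp [max_eq_right hv.le]
    simpa [max_eq_right hu.le] using (hasDerivAt_const u (0 : ℝ)).congr_of_eventuallyEq h
  · have h : (fun t : ℝ => max t 0 ^ (k + 2)) =ᶠ[𝓝 u] fun v => v ^ (k + 2) := by
      filter_upwards [eventually_gt_nhds hu] with v hv
      rw [max_eq_left hv.le]
    simpa [max_eq_left hu.le] using (hasDerivAt_pow (k + 2) u).congr_of_eventuallyEq h

theorem contDiff_max_zero_pow (k : ℕ) : ContDiff ℝ k (fun t : ℝ => max t 0 ^ (k + 1)) := by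
  induction k with
  | zero => exact contDiff_zero.2 (by fun_prop)
  | succ k ih =>
    have hderiv := hasDerivAt_max_zero_pow k
    rw [Nat.cast_succ, contDiff_succ_iff_deriv]
    refine ⟨fun t => (hderiv t).differentiableAt, by simp, ?_⟩
    rw [funext fun t => (hderiv t).deriv]
    exact contDiff_const.mul ih

section SecondDifference

variable {E : Type*} [NormedAddCommGroup E] [NormedSpace ℝ E]

theorem DifferentiableAt.hasDerivAt_comp_add_smul {f : E → ℝ} {x v : E} {t : ℝ}
    (hf : DifferentiableAt ℝ f (x + t • v)) :
    HasDerivAt (fun t : ℝ => f (x + t • v)) (fderiv ℝ f (x + t • v) v) t := by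
  have hline : HasDerivAt (fun t : ℝ => x + t • v) v t := by
    simpa using ((hasDerivAt_id t).smul_const v).const_add x
  exact hf.hasFDerivAt.comp_hasDerivAt t hline

theorem Convex.abs_second_diff_le_of_lipschitzOnWith {s : Set E} (hs : Convex ℝ s) {f : E → ℝ}
    {K : ℝ≥0} (hf : ∀ z ∈ s, DifferentiableAt ℝ f z) (hK : LipschitzOnWith K (fderiv ℝ f) s)
    {x y : E} (hp : x + y ∈ s) (hm : x - y ∈ s) :
    |f (x + y) + f (x - y) - 2 * f x| ≤ 2 * K * ‖y‖ ^ 2 := by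
  have hmem : ∀ t ∈ Icc (0 : ℝ) 1, ∀ v ∈ ({y, -y} : Set E), x + t • v ∈ s := by
    rintro t ⟨ht0, ht1⟩ v (rfl | rfl)
    · convert hs.add_smul_sub_mem hm hp (t := (1 + t) / 2) ⟨by linarith, by linarith⟩ using 1
      module
    · convert hs.add_smul_sub_mem hp hm (t := (1 + t) / 2) ⟨by linarith, by linarith⟩ using 1
      module
  let F : ℝ → ℝ := fun t => f (x + t • y) + f (x + t • -y)
  have hF : ∀ t ∈ Icc (0 : ℝ) 1, HasDerivWithinAt F
      (fderiv ℝ f (x + t • y) y + fderiv ℝ f (x + t • -y) (-y)) (Icc 0 1) t := fun t ht =>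
    ((hf _ (hmem t ht y (by simp))).hasDerivAt_comp_add_smul.add
      (hf _ (hmem t ht (-y) (by simp))).hasDerivAt_comp_add_smul).hasDerivWithinAt
  have hF' : ∀ t ∈ Icc (0 : ℝ) 1,
      ‖fderiv ℝ f (x + t • y) y + fderiv ℝ f (x + t • -y) (-y)‖ ≤ 2 * K * ‖y‖ ^ 2 := by
    intro t ht
    have hlip := hK.norm_sub_le (hmem t ht y (by simp)) (hmem t ht (-y) (by simp))
    calc ‖fderiv ℝ f (x + t • y) y + fderiv ℝ f (x + t • -y) (-y)‖
        = ‖(fderiv ℝ f (x + t • y) - fderiv ℝ f (x + t • -y)) y‖ := by simp [sub_eq_add_neg]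
      _ ≤ K * ‖x + t • y - (x + t • -y)‖ * ‖y‖ :=
        ((fderiv ℝ f (x + t • y) - fderiv ℝ f (x + t • -y)).le_opNorm y).trans
          (mul_le_mul_of_nonneg_right hlip (norm_nonneg y))
      _ = K * (2 * t) * ‖y‖ ^ 2 := by
        rw [show x + t • y - (x + t • -y) = (2 * t) • y by module, norm_smul,
          Real.norm_of_nonneg (by linarith [ht.1])]
        ring
      _ ≤ 2 * K * ‖y‖ ^ 2 := by
        gcongr ?_ * _
        nlinarith [K.2, ht.2]
  have := (convex_Icc (0 : ℝ) 1).norm_image_sub_le_of_norm_hasDerivWithin_le hF hF'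
    (left_mem_Icc.2 zero_le_one) (right_mem_Icc.2 zero_le_one)
  simpa [F, ← sub_eq_add_neg, two_mul, sub_sub] using this

theorem ContDiff.exists_abs_second_diff_le [FiniteDimensional ℝ E] {f : E → ℝ}
    (hf : ContDiff ℝ 2 f) (R : ℝ) :
    ∃ M, 0 ≤ M ∧ ∀ x y : E, ‖x‖ + ‖y‖ ≤ R →
      |f (x + y) + f (x - y) - 2 * f x| ≤ M * ‖y‖ ^ 2 := by
  obtain ⟨K, hK⟩ := (hf.fderiv_right (m := 1) le_rfl).contDiffOn.exists_lipschitzOnWith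
    one_ne_zero (convex_closedBall 0 R) (isCompact_closedBall 0 R)
  refine ⟨2 * K, by positivity, fun x y hxy => ?_⟩
  refine (convex_closedBall 0 R).abs_second_diff_le_of_lipschitzOnWith
    (fun z _ => hf.differentiable two_ne_zero z) hK ?_ ?_
  · exact mem_closedBall_zero_iff.2 ((norm_add_le x y).trans hxy)
  · exact mem_closedBall_zero_iff.2 ((norm_sub_le x y).trans hxy)

end SecondDifference

theorem div_rpow_le_mul_rpow_sub {a t M : ℝ} (r : ℝ) (ha : 0 ≤ a) (ht : 0 ≤ t) (hM : 0 ≤ M)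
    (hat : a ≤ M * t ^ 2) : a / t ^ r ≤ M * t ^ (2 - r) := by
  rcases ht.eq_or_lt with rfl | ht
  · simp [le_antisymm (by simpa using hat) ha]
    positivity
  · rw [Real.rpow_sub ht, Real.rpow_two, ← mul_div_assoc]
    gcongr

theorem div_rpow_le_mul_one_add_rpow_neg {a t r : ℝ} (ha : 0 ≤ a) (ht : 1 ≤ t) (hr : 0 ≤ r) :
    a / t ^ r ≤ 2 ^ r * a * (1 + t) ^ (-r) := by
  have ht0 : 0 < t := by linarith
  calc a / t ^ r = 2 ^ r * a / (2 * t) ^ r := by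
        rw [Real.mul_rpow zero_le_two ht0.le, mul_div_mul_left _ _ (by positivity)]
    _ ≤ 2 ^ r * a / (1 + t) ^ r := by gcongr; linarith
    _ = 2 ^ r * a * (1 + t) ^ (-r) := by rw [Real.rpow_neg (by linarith), div_eq_mul_inv]

section HaarIntegral

variable {E : Type*} [NormedAddCommGroup E] [NormedSpace ℝ E] [FiniteDimensional ℝ E]
  [MeasurableSpace E] [BorelSpace E]

theorem exists_lintegral_div_rpow_le (μ : Measure E) [μ.IsAddHaarMeasure]
    (hd : 1 ≤ finrank ℝ E) {r M B : ℝ} (hr : (finrank ℝ E : ℝ) < r)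
    (hr2 : r < finrank ℝ E + 2) (hM : 0 ≤ M) :
    ∃ C, 0 < C ∧ ∀ g : E → ℝ, (∀ y, ‖y‖ < 1 → |g y| ≤ M * ‖y‖ ^ 2) → (∀ y, |g y| ≤ B) →
      ∫⁻ y, ENNReal.ofReal (|g y| / ‖y‖ ^ r) ∂μ ≤ ENNReal.ofReal C := by
  have hr0 : 0 < r := lt_of_le_of_lt (Nat.cast_nonneg _) hr
  let G : E → ℝ := fun y =>
    (Metric.ball 0 1).indicator (fun y => M * ‖y‖ ^ (2 - r)) y + 2 ^ r * B * (1 + ‖y‖) ^ (-r)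
  have hG : Integrable G μ := by
    refine Integrable.add ?_ ((integrable_one_add_norm hr).const_mul _)
    refine (integrableOn_ball_of_norm_le_rpow (C := M) (α := r - 2) hd (by linarith)
      (Eventually.of_forall fun y => ?_)
      ((measurable_norm.pow_const _).const_mul M).aestronglyMeasurable).integrable_indicator
      measurableSet_ball
    rw [neg_sub, Real.norm_of_nonneg (by positivity)]
  refine ⟨max (∫ y, G y ∂μ) 1, lt_max_of_lt_right one_pos, fun g hgM hgB => ?_⟩
  have hB : 0 ≤ B := (abs_nonneg _).trans (hgB 0)
  have hgG : ∀ y, |g y| / ‖y‖ ^ r ≤ G y := by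
    intro y
    have hball : 0 ≤ (Metric.ball 0 1).indicator (fun y => M * ‖y‖ ^ (2 - r)) y :=
      indicator_nonneg (fun y _ => by positivity) y
    have hfar : 0 ≤ 2 ^ r * B * (1 + ‖y‖) ^ (-r) := by positivity
    by_cases hy : ‖y‖ < 1
    · have := div_rpow_le_mul_rpow_sub r (abs_nonneg _) (norm_nonneg y) hM (hgM y hy)
      simp only [G, indicator_of_mem (mem_ball_zero_iff.2 hy)]
      linarith
    · have := div_rpow_le_mul_one_add_rpow_neg (r := r) (t := ‖y‖) hB (by linarith) hr0.le
      have := div_le_div_of_nonneg_right (c := ‖y‖ ^ r) (hgB y) (by positivity)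
      linarith
  calc ∫⁻ y, ENNReal.ofReal (|g y| / ‖y‖ ^ r) ∂μ ≤ ∫⁻ y, ENNReal.ofReal (G y) ∂μ :=
        lintegral_mono fun y => ENNReal.ofReal_le_ofReal (hgG y)
    _ = ENNReal.ofReal (∫ y, G y ∂μ) :=
        (ofReal_integral_eq_lintegral_ofReal hG
          (Eventually.of_forall fun y => (div_nonneg (abs_nonneg _) (by positivity)).trans
            (hgG y))).symm
    _ ≤ ENNReal.ofReal (max (∫ y, G y ∂μ) 1) := ENNReal.ofReal_le_ofReal (le_max_left _ _)

end HaarIntegral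

theorem phi_eq_rpow (n : ℕ) (s : ℝ) (x : EuclideanSpace ℝ (Fin n)) :
    phi n s x = (1 + max (‖x‖ - 1) 0 ^ 4) ^ (-(((n : ℝ) + 2 * s) / 4)) := by
  unfold phi jbr
  split_ifs with h
  · simp [max_eq_right (by linarith : ‖x‖ - 1 ≤ 0)]
  · rw [max_eq_left (by linarith), ← Real.rpow_mul (by positivity)]
    ring_nf

theorem phi_mem_Icc (n : ℕ) {s : ℝ} (hs : 0 ≤ s) (x : EuclideanSpace ℝ (Fin n)) :
    phi n s x ∈ Icc 0 1 := by
  rw [phi_eq_rpow]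
  refine ⟨by positivity, Real.rpow_le_one_of_one_le_of_nonpos ?_ ?_⟩
  · have := pow_nonneg (le_max_right (‖x‖ - 1) 0) 4
    linarith
  · have : (0 : ℝ) ≤ n := n.cast_nonneg
    linarith

theorem contDiff_phi (n : ℕ) (s : ℝ) : ContDiff ℝ 2 (phi n s) := by
  rw [funext (phi_eq_rpow n s), contDiff_iff_contDiffAt]
  intro x
  by_cases hx : ‖x‖ < 1
  · refine contDiffAt_const (c := (1 : ℝ)).congr_of_eventuallyEq ?_
    filter_upwards [Metric.isOpen_ball.mem_nhds (mem_ball_zero_iff.2 hx)] with y hy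
    simp [max_eq_right (by linarith [mem_ball_zero_iff.1 hy] : ‖y‖ - 1 ≤ 0)]
  · have hx0 : x ≠ 0 := by rintro rfl; simp at hx
    have hpos : (1 : ℝ) + max (‖x‖ - 1) 0 ^ 4 ≠ 0 := by positivity
    have hmax : ContDiff ℝ 2 (fun t : ℝ => max t 0 ^ 4) :=
      (contDiff_max_zero_pow 3).of_le (by norm_num)
    exact (Real.contDiffAt_rpow_const_of_ne hpos).comp x <| contDiffAt_const.add <|
      hmax.contDiffAt.comp x ((contDiffAt_norm ℝ hx0).sub contDiffAt_const)

/-- For `n ≥ 1` and `s ∈ (0,1)`, there is a constant `C > 0` (depending only on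
`n` and `s`) such that for every `x` with `|x| ≤ 2`,
`∫ |φ(x+y) + φ(x-y) - 2φ(x)| / |y|^{n+2s} dy ≤ C`
(in particular the integral converges). -/
theorem stmt_8 (n : ℕ) (hn : 1 ≤ n) (s : ℝ) (hs : s ∈ Set.Ioo (0 : ℝ) 1) :
    ∃ C : ℝ, 0 < C ∧ ∀ x : EuclideanSpace ℝ (Fin n), ‖x‖ ≤ 2 →
      ∫⁻ y : EuclideanSpace ℝ (Fin n),
          ENNReal.ofReal
            (|phi n s (x + y) + phi n s (x - y) - 2 * phi n s x| /
              ‖y‖ ^ ((n : ℝ) + 2 * s))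
        ≤ ENNReal.ofReal C := by
  obtain ⟨hs0, hs1⟩ := hs
  have hd : finrank ℝ (EuclideanSpace ℝ (Fin n)) = n := finrank_euclideanSpace_fin
  obtain ⟨M, hM0, hM⟩ := (contDiff_phi n s).exists_abs_second_diff_le 3
  obtain ⟨C, hC, hCg⟩ := exists_lintegral_div_rpow_le volume (hd ▸ hn) (r := n + 2 * s) (B := 2)
    (by rw [hd]; linarith) (by rw [hd]; linarith) hM0
  refine ⟨C, hC, fun x hx => hCg _ (fun y hy => hM x y (by linarith)) fun y => ?_⟩
  have h₁ := phi_mem_Icc n hs0.le (x + y)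
  have h₂ := phi_mem_Icc n hs0.le (x - y)
  have h₃ := phi_mem_Icc n hs0.le x
  exact abs_le.2 ⟨by linarith [h₁.1, h₂.1, h₃.2], by linarith [h₁.2, h₂.2, h₃.1]⟩
end

section
/- Let n ≥ 1 and s ∈ (0,1). Set ⟨x⟩ = (1 + (|x| - 1)^4)^{1/4} for x ∈ ℝⁿ, and define φ : ℝⁿ → ℝ by φ(x) = 1 if |x| ≤ 1 and φ(x) = ⟨x⟩^{-n-2s} if |x| ≥ 1. Then there exists a constant C > 0 (depending only on n and s) such that for every x ∈ ℝⁿ with |x| ≥ 2, ∫_{|x|/2 ≤ |y| ≤ 2|x|} |φ(x+y) + φ(x-y) - 2φ(x)| / |y|^{n+2s} dy ≤ C |x|^{-n-2s}. -/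
/-!
On the annulus `|x|/2 ≤ |y|` the kernel `|y|^{-n-2s}` is at most `2^{n+2s} |x|^{-n-2s}`, and the
second difference is at most `φ(x+y) + φ(x-y) + 2φ(x)`. The two translates integrate to at most
`‖φ‖₁`, which is finite because `φ(x) ≤ 4^{n+2s} (1+|x|)^{-n-2s}`; the constant term contributes
at most `2φ(x) |B(0, 2|x|)| ≲ |x|^{-n-2s} |x|^n ≤ 1`.
-/

open MeasureTheory Real Set

theorem rpow_neg_div {t c : ℝ} (ht : 0 ≤ t) (hc : 0 ≤ c) (q : ℝ) :
    (t / c) ^ (-q) = c ^ q * t ^ (-q) := by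
  rw [div_rpow ht hc, rpow_neg hc, div_inv_eq_mul, mul_comm]

theorem abs_add_sub_two_mul_div_rpow_le {a b c r t q : ℝ} (ha : 0 ≤ a) (hb : 0 ≤ b) (hc : 0 ≤ c)
    (hr : 0 < r) (hrt : r ≤ t) (hq : 0 ≤ q) :
    |a + b - 2 * c| / t ^ q ≤ r ^ (-q) * (a + b + 2 * c) := by
  rw [rpow_neg hr.le, ← div_eq_inv_mul]
  exact div_le_div₀ (by positivity) (abs_le.mpr ⟨by linarith, by linarith⟩) (by positivity)
    (rpow_le_rpow hr.le hrt hq)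

theorem setLIntegral_abs_secondDiff_div_rpow_le {E : Type*} [NormedAddCommGroup E]
    [MeasurableSpace E] [BorelSpace E] {μ : Measure E} [μ.IsAddLeftInvariant] [μ.IsNegInvariant]
    {f : E → ℝ} (hf : ∀ y, 0 ≤ f y) (hfm : Measurable f) {A : Set E} {r q : ℝ} (hr : 0 < r)
    (hq : 0 ≤ q) (hA : ∀ y ∈ A, r ≤ ‖y‖) (x : E) :
    ∫⁻ y in A, ENNReal.ofReal (|f (x + y) + f (x - y) - 2 * f x| / ‖y‖ ^ q) ∂μ ≤
      2 * ENNReal.ofReal (r ^ (-q)) *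
        (∫⁻ y, ENNReal.ofReal (f y) ∂μ + ENNReal.ofReal (f x) * μ A) := by
  set F : E → ENNReal := fun y ↦ ENNReal.ofReal (f y)
  have hFm : Measurable F := ENNReal.measurable_ofReal.comp hfm
  have hpointwise : ∀ y ∈ A, ENNReal.ofReal (|f (x + y) + f (x - y) - 2 * f x| / ‖y‖ ^ q) ≤
      ENNReal.ofReal (r ^ (-q)) * (F (x + y) + F (x - y) + 2 * F x) := fun y hy ↦ by
    simp only [F]
    rw [← ENNReal.ofReal_ofNat 2, ← ENNReal.ofReal_mul zero_le_two,
      ← ENNReal.ofReal_add (hf _) (hf _),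
      ← ENNReal.ofReal_add (by linarith [hf (x + y), hf (x - y)]) (by linarith [hf x]),
      ← ENNReal.ofReal_mul (by positivity)]
    exact ENNReal.ofReal_le_ofReal
      (abs_add_sub_two_mul_div_rpow_le (hf _) (hf _) (hf _) hr (hA y hy) hq)
  have htranslate : ∫⁻ y in A, F (x + y) ∂μ + ∫⁻ y in A, F (x - y) ∂μ ≤ 2 * ∫⁻ y, F y ∂μ := by
    rw [two_mul]
    exact add_le_add
      ((setLIntegral_le_lintegral _ _).trans (lintegral_add_left_eq_self F x).le)
      ((setLIntegral_le_lintegral _ _).trans (lintegral_sub_left_eq_self F x).le)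
  calc ∫⁻ y in A, ENNReal.ofReal (|f (x + y) + f (x - y) - 2 * f x| / ‖y‖ ^ q) ∂μ
      ≤ ∫⁻ y in A, ENNReal.ofReal (r ^ (-q)) * (F (x + y) + F (x - y) + 2 * F x) ∂μ :=
        setLIntegral_mono (by fun_prop) hpointwise
    _ = ENNReal.ofReal (r ^ (-q)) *
          (∫⁻ y in A, F (x + y) ∂μ + ∫⁻ y in A, F (x - y) ∂μ + 2 * F x * μ A) := by
        rw [lintegral_const_mul _ (by fun_prop), lintegral_add_right _ measurable_const,
          lintegral_add_right _ (by fun_prop), setLIntegral_const]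
    _ ≤ ENNReal.ofReal (r ^ (-q)) * (2 * ∫⁻ y, F y ∂μ + 2 * F x * μ A) := by
        gcongr
    _ = _ := by ring

section

variable {n : ℕ} {s : ℝ}

theorem jbr_pos (x : EuclideanSpace ℝ (Fin n)) : 0 < jbr x := by
  unfold jbr; positivity

theorem le_jbr_of_pow_four_le {x : EuclideanSpace ℝ (Fin n)} {a : ℝ} (ha : 0 ≤ a)
    (h : a ^ 4 ≤ 1 + (‖x‖ - 1) ^ 4) : a ≤ jbr x := by
  calc a = (a ^ 4) ^ ((1 : ℝ) / 4) := by
        rw [← rpow_natCast, ← rpow_mul ha]; norm_num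
    _ ≤ jbr x := rpow_le_rpow (by positivity) h (by norm_num)

theorem continuous_jbr : Continuous (jbr : EuclideanSpace ℝ (Fin n) → ℝ) :=
  (by fun_prop : Continuous fun x : EuclideanSpace ℝ (Fin n) ↦ 1 + (‖x‖ - 1) ^ 4).rpow_const
    fun _ ↦ Or.inr (by norm_num)

theorem measurable_phi : Measurable (phi n s) :=
  Measurable.ite (measurableSet_le (by fun_prop) measurable_const) measurable_const
    (continuous_jbr.rpow_const fun x ↦ Or.inl (jbr_pos x).ne').measurable

theorem phi_nonneg (x : EuclideanSpace ℝ (Fin n)) : 0 ≤ phi n s x := by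
  unfold phi; split
  · exact zero_le_one
  · exact (rpow_pos_of_pos (jbr_pos x) _).le

theorem phi_le_one_add_norm_rpow (hs : 0 ≤ s) (x : EuclideanSpace ℝ (Fin n)) :
    phi n s x ≤ 4 ^ ((n : ℝ) + 2 * s) * (1 + ‖x‖) ^ (-((n : ℝ) + 2 * s)) := by
  have hx0 := norm_nonneg x
  rw [← rpow_neg_div (by positivity) (by norm_num)]
  unfold phi
  split_ifs with hx
  · exact one_le_rpow_of_pos_of_le_one_of_nonpos (by positivity) (by linarith) (by linarith)
  · -- `(1 + t)/4 ≤ ⟨t⟩` is the power-mean inequality `((u + 2)/2)^4 ≤ (u^4 + 16)/2` for `u = t - 1`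
    refine rpow_le_rpow_of_nonpos (by positivity)
      (le_jbr_of_pow_four_le (by positivity) ?_) (by linarith)
    nlinarith [sq_nonneg (‖x‖ - 1), sq_nonneg ((‖x‖ - 1) ^ 2 - 1), sq_nonneg ((‖x‖ - 1) ^ 2)]

theorem phi_le_norm_rpow (hs : 0 ≤ s) {x : EuclideanSpace ℝ (Fin n)} (hx : x ≠ 0) :
    phi n s x ≤ 4 ^ ((n : ℝ) + 2 * s) * ‖x‖ ^ (-((n : ℝ) + 2 * s)) :=
  (phi_le_one_add_norm_rpow hs x).trans <| mul_le_mul_of_nonneg_left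
    (rpow_le_rpow_of_nonpos (norm_pos_iff.mpr hx) (by linarith) (by linarith)) (by positivity)

theorem integrable_phi (hs : 0 < s) : Integrable (phi n s) := by
  refine Integrable.mono'
    ((integrable_one_add_norm (r := (n : ℝ) + 2 * s) ?_).const_mul (4 ^ ((n : ℝ) + 2 * s)))
    measurable_phi.aestronglyMeasurable (Filter.Eventually.of_forall fun x ↦ ?_)
  · simp only [finrank_euclideanSpace_fin]; linarith
  · rw [Real.norm_of_nonneg (phi_nonneg x)]
    exact phi_le_one_add_norm_rpow hs.le x

theorem phi_mul_norm_pow_le (hs : 0 ≤ s) {x : EuclideanSpace ℝ (Fin n)} (hx : 1 ≤ ‖x‖) :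
    phi n s x * ‖x‖ ^ n ≤ 4 ^ ((n : ℝ) + 2 * s) := by
  have hx0 : 0 < ‖x‖ := by linarith
  calc phi n s x * ‖x‖ ^ n
      ≤ 4 ^ ((n : ℝ) + 2 * s) * ‖x‖ ^ (-((n : ℝ) + 2 * s)) * ‖x‖ ^ n := by
        gcongr; exact phi_le_norm_rpow hs (norm_pos_iff.mp hx0)
    _ = 4 ^ ((n : ℝ) + 2 * s) * ‖x‖ ^ (-(2 * s)) := by
        rw [mul_assoc, ← rpow_natCast, ← rpow_add hx0]; ring_nf
    _ ≤ 4 ^ ((n : ℝ) + 2 * s) :=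
        mul_le_of_le_one_right (by positivity) (rpow_le_one_of_one_le_of_nonpos hx (by linarith))

theorem ofReal_phi_mul_volume_closedBall_le (hs : 0 ≤ s) {x : EuclideanSpace ℝ (Fin n)}
    (hx : 1 ≤ ‖x‖) {c : ℝ} (hc : 0 ≤ c) :
    ENNReal.ofReal (phi n s x) *
        volume (Metric.closedBall (0 : EuclideanSpace ℝ (Fin n)) (c * ‖x‖)) ≤
      ENNReal.ofReal (c ^ n * 4 ^ ((n : ℝ) + 2 * s)) *
        volume (Metric.closedBall (0 : EuclideanSpace ℝ (Fin n)) 1) := by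
  rw [Measure.addHaar_closedBall' _ _ (by positivity), finrank_euclideanSpace_fin, ← mul_assoc,
    ← ENNReal.ofReal_mul (phi_nonneg x)]
  gcongr ENNReal.ofReal ?_ * _
  rw [mul_pow, mul_left_comm]
  exact mul_le_mul_of_nonneg_left (phi_mul_norm_pow_le hs hx) (by positivity)

end

theorem stmt_10_general (n : ℕ) (s : ℝ) (hs : s ∈ Set.Ioo (0 : ℝ) 1) :
    ∃ C : ℝ, 0 < C ∧ ∀ x : EuclideanSpace ℝ (Fin n), 2 ≤ ‖x‖ →
      ∫⁻ y in {y : EuclideanSpace ℝ (Fin n) | ‖x‖ / 2 ≤ ‖y‖ ∧ ‖y‖ ≤ 2 * ‖x‖},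
          ENNReal.ofReal
            (|phi n s (x + y) + phi n s (x - y) - 2 * phi n s x| /
              ‖y‖ ^ ((n : ℝ) + 2 * s))
        ≤ ENNReal.ofReal (C * ‖x‖ ^ (-((n : ℝ) + 2 * s))) := by
  set q := (n : ℝ) + 2 * s
  have hq : 0 ≤ q := by have := hs.1; positivity
  set J := ∫⁻ y, ENNReal.ofReal (phi n s y)
  set κ := volume (Metric.closedBall (0 : EuclideanSpace ℝ (Fin n)) 1)
  set K := 2 * ENNReal.ofReal (2 ^ q) * (J + ENNReal.ofReal (2 ^ n * 4 ^ q) * κ)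
  have hK : K ≠ ⊤ := by
    have hJ : J < ⊤ := (integrable_phi hs.1).lintegral_lt_top
    have hκ : κ < ⊤ := measure_closedBall_lt_top
    finiteness
  refine ⟨K.toReal + 1, by positivity, fun x hx ↦ ?_⟩
  set A := {y : EuclideanSpace ℝ (Fin n) | ‖x‖ / 2 ≤ ‖y‖ ∧ ‖y‖ ≤ 2 * ‖x‖}
  have hconst : ENNReal.ofReal (phi n s x) * volume A ≤ ENNReal.ofReal (2 ^ n * 4 ^ q) * κ :=
    calc ENNReal.ofReal (phi n s x) * volume A
        ≤ ENNReal.ofReal (phi n s x) * volume (Metric.closedBall 0 (2 * ‖x‖)) := by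
          gcongr
          exact fun y hy ↦ mem_closedBall_zero_iff.mpr hy.2
      _ ≤ _ := ofReal_phi_mul_volume_closedBall_le hs.1.le (by linarith) zero_le_two
  calc _ ≤ 2 * ENNReal.ofReal ((‖x‖ / 2) ^ (-q)) * (J + ENNReal.ofReal (phi n s x) * volume A) :=
        setLIntegral_abs_secondDiff_div_rpow_le phi_nonneg measurable_phi (by linarith) hq
          (fun _ ↦ And.left) x
    _ ≤ 2 * ENNReal.ofReal ((‖x‖ / 2) ^ (-q)) * (J + ENNReal.ofReal (2 ^ n * 4 ^ q) * κ) := by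
        gcongr
    _ = K * ENNReal.ofReal (‖x‖ ^ (-q)) := by
        rw [rpow_neg_div (by positivity) zero_le_two, ENNReal.ofReal_mul (by positivity)]; ring
    _ ≤ ENNReal.ofReal ((K.toReal + 1) * ‖x‖ ^ (-q)) := by
        rw [ENNReal.ofReal_mul (by positivity)]
        gcongr
        exact (ENNReal.le_ofReal_iff_toReal_le hK (by positivity)).mpr (by linarith)

/-- For `n ≥ 1` and `s ∈ (0,1)`, there is a constant `C > 0` (depending only on
`n` and `s`) such that for every `x` with `|x| ≥ 2`,
`∫_{|x|/2 ≤ |y| ≤ 2|x|} |φ(x+y) + φ(x-y) - 2φ(x)| / |y|^{n+2s} dy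
  ≤ C |x|^{-n-2s}`. -/
theorem stmt_10 (n : ℕ) (hn : 1 ≤ n) (s : ℝ) (hs : s ∈ Set.Ioo (0 : ℝ) 1) :
    ∃ C : ℝ, 0 < C ∧ ∀ x : EuclideanSpace ℝ (Fin n), 2 ≤ ‖x‖ →
      ∫⁻ y in {y : EuclideanSpace ℝ (Fin n) | ‖x‖ / 2 ≤ ‖y‖ ∧ ‖y‖ ≤ 2 * ‖x‖},
          ENNReal.ofReal
            (|phi n s (x + y) + phi n s (x - y) - 2 * phi n s x| /
              ‖y‖ ^ ((n : ℝ) + 2 * s))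
        ≤ ENNReal.ofReal (C * ‖x‖ ^ (-((n : ℝ) + 2 * s))) :=
  stmt_10_general n s hs
end

section
/- Let n ≥ 1 and s ∈ (0,1]. Set ⟨x⟩ = (1 + (|x| - 1)^4)^{1/4} for x ∈ ℝⁿ, and define φ : ℝⁿ → ℝ by φ(x) = 1 if |x| ≤ 1 and φ(x) = ⟨x⟩^{-n-2s} if |x| ≥ 1. Then there exists a constant C > 0 (depending only on n and s) such that the Laplacian of φ satisfies |Δφ(x)| ≤ C ⟨x⟩^{-n-2s-2} for all x ∈ ℝⁿ; in particular |Δφ(x)| ≤ C φ(x) for all x ∈ ℝⁿ. -/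
open MeasureTheory Real Set

/-- The Laplace operator on `ℝⁿ`: the sum of the pure second derivatives in the
directions of the standard orthonormal basis. -/
noncomputable def lap (n : ℕ) (f : EuclideanSpace ℝ (Fin n) → ℝ)
    (x : EuclideanSpace ℝ (Fin n)) : ℝ :=
  ∑ i : Fin n, iteratedFDeriv ℝ 2 f x
    ![EuclideanSpace.single i (1 : ℝ), EuclideanSpace.single i (1 : ℝ)]

open Filter Topology

/-!
Write `p = n + 2s`. The function `φ` is radial, `φ(x) = g(|x|)` with
`g(r) = (1 + (r - 1)₊⁴)^{-p/4}`, and `g` is `C²` because `(r - 1)₊⁴` is. Away from the origin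
`Δφ = g''(r) + (n - 1) g'(r) / r`, while `Δφ = 0` on the open unit ball where `φ ≡ 1`.
For `r ≥ 1` put `t = r - 1` and `A = 1 + t⁴ = ⟨x⟩⁴`: every term of `g''` and of `g' / r` has
the form `A^{-(p+2)/4 - k/4} tᵏ` with `k ∈ {2, 6}` (up to a factor `t / r ≤ 1`), and
`t ≤ A^{1/4}` bounds it by `A^{-(p+2)/4} = ⟨x⟩^{-p-2}`. Since `⟨x⟩ ≥ 1`, also
`⟨x⟩^{-p-2} ≤ φ(x)`.
-/

section RadialLaplacian

variable {E : Type*} [NormedAddCommGroup E] [InnerProductSpace ℝ E]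

theorem hasFDerivAt_norm_of_ne_zero {x : E} (hx : x ≠ 0) :
    HasFDerivAt (‖·‖) (‖x‖⁻¹ • innerSL ℝ x) x := by
  have h := (hasStrictFDerivAt_norm_sq x).hasFDerivAt.sqrt (by simpa using hx)
  simp only [sqrt_sq (norm_nonneg _)] at h
  refine h.congr_fderiv ?_
  ext v
  simp only [smul_apply, coe_innerSL_apply, nsmul_eq_mul, Nat.cast_ofNat, smul_eq_mul]
  field_simp

theorem fderiv_comp_norm_eventuallyEq {f f' : ℝ → ℝ} {x : E} (hx : x ≠ 0)
    (hf : ∀ᶠ r in 𝓝 ‖x‖, HasDerivAt f (f' r) r) :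
    fderiv ℝ (fun y => f ‖y‖) =ᶠ[𝓝 x] fun y => (f' ‖y‖ / ‖y‖) • innerSL ℝ y := by
  filter_upwards [continuous_norm.continuousAt.eventually hf, eventually_ne_nhds hx]
    with y hfy hy
  have h : HasFDerivAt (fun y => f ‖y‖) _ y :=
    hfy.comp_hasFDerivAt y (hasFDerivAt_norm_of_ne_zero hy)
  rw [h.fderiv, smul_smul, div_eq_mul_inv]

end RadialLaplacian

theorem lap_comp_norm {n : ℕ} {f f' : ℝ → ℝ} {f'' : ℝ} {x : EuclideanSpace ℝ (Fin n)}
    (hx : x ≠ 0) (hf : ∀ᶠ r in 𝓝 ‖x‖, HasDerivAt f (f' r) r) (hf' : HasDerivAt f' f'' ‖x‖) :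
    lap n (fun y => f ‖y‖) x = f'' + (n - 1) * f' ‖x‖ / ‖x‖ := by
  have hr : ‖x‖ ≠ 0 := norm_ne_zero_iff.mpr hx
  have hquot : HasDerivAt (fun r => f' r / r) ((f'' * ‖x‖ - f' ‖x‖) / ‖x‖ ^ 2) ‖x‖ :=
    (hf'.div (hasDerivAt_id' _) hr).congr_deriv (by ring)
  have hcoeff : HasFDerivAt (fun y : EuclideanSpace ℝ (Fin n) => f' ‖y‖ / ‖y‖)
      (((f'' * ‖x‖ - f' ‖x‖) / ‖x‖ ^ 2) • (‖x‖⁻¹ • innerSL ℝ x)) x :=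
    hquot.comp_hasFDerivAt x (hasFDerivAt_norm_of_ne_zero hx)
  have hhess := (fderiv_comp_norm_eventuallyEq hx hf).fderiv_eq.trans
    (hcoeff.smul (innerSL ℝ).hasFDerivAt).fderiv
  have hterm : ∀ i : Fin n, iteratedFDeriv ℝ 2 (fun y => f ‖y‖) x
      ![EuclideanSpace.single i 1, EuclideanSpace.single i 1]
      = f' ‖x‖ / ‖x‖ + (f'' * ‖x‖ - f' ‖x‖) / ‖x‖ ^ 3 * x i ^ 2 := by
    intro i
    rw [iteratedFDeriv_two_apply, hhess]
    simp only [Matrix.cons_val_zero, Matrix.cons_val_one, Matrix.cons_val_fin_one, add_apply,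
      smul_apply, ContinuousLinearMap.smulRight_apply, coe_innerSL_apply, smul_eq_mul]
    rw [innerSL_apply_apply, innerSL_apply_apply, real_inner_self_eq_norm_sq,
      EuclideanSpace.inner_single_right]
    simp only [PiLp.norm_single, norm_one, one_pow, mul_one, ringHom_apply]
    field_simp
  simp only [lap, hterm, Finset.sum_add_distrib, ← Finset.mul_sum,
    ← EuclideanSpace.real_norm_sq_eq, Finset.sum_const, Finset.card_univ, Fintype.card_fin,
    nsmul_eq_mul]
  field_simp
  ring

theorem lap_eq_zero_of_eventuallyEq_const {n : ℕ} {f : EuclideanSpace ℝ (Fin n) → ℝ} {c : ℝ}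
    {x : EuclideanSpace ℝ (Fin n)} (h : f =ᶠ[𝓝 x] fun _ => c) : lap n f x = 0 := by
  simp [lap, (h.iteratedFDeriv ℝ 2).eq_of_nhds, iteratedFDeriv_const_of_ne two_ne_zero]

theorem hasDerivAt_posPart_pow (m : ℕ) (y : ℝ) :
    HasDerivAt (fun r : ℝ => r⁺ ^ (m + 2)) ((m + 2) * y⁺ ^ (m + 1)) y := by
  rcases lt_trichotomy y 0 with hy | rfl | hy
  · have h : (fun r : ℝ => r⁺ ^ (m + 2)) =ᶠ[𝓝 y] fun _ => 0 := by
      filter_upwards [Iio_mem_nhds hy] with r hr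
      simp [posPart_eq_zero.2 ((mem_Iio.1 hr).le)]
    simpa [posPart_eq_zero.2 hy.le] using (hasDerivAt_const y (0 : ℝ)).congr_of_eventuallyEq h
  · rw [hasDerivAt_iff_isLittleO]
    simp only [posPart_zero, sub_zero, zero_pow (Nat.succ_ne_zero _), mul_zero, smul_zero]
    refine (Asymptotics.IsBigO.of_bound 1 (Eventually.of_forall fun r => ?_)).trans_isLittleO
      (Asymptotics.isLittleO_pow_id (n := m + 2) (by omega))
    rw [one_mul, norm_pow, norm_pow, Real.norm_of_nonneg (posPart_nonneg r), Real.norm_eq_abs]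
    exact pow_le_pow_left₀ (posPart_nonneg r) (sup_le (le_abs_self r) (abs_nonneg r)) _
  · have h : (fun r : ℝ => r⁺ ^ (m + 2)) =ᶠ[𝓝 y] fun r => r ^ (m + 2) := by
      filter_upwards [Ioi_mem_nhds hy] with r hr
      rw [posPart_eq_self.2 (mem_Ioi.1 hr).le]
    simpa [posPart_eq_self.2 hy.le] using (hasDerivAt_pow (m + 2) y).congr_of_eventuallyEq h

theorem hasDerivAt_posPart_sub_one_pow (m : ℕ) (r : ℝ) :
    HasDerivAt (fun r : ℝ => (r - 1)⁺ ^ (m + 2)) ((m + 2) * (r - 1)⁺ ^ (m + 1)) r := by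
  have h := (hasDerivAt_posPart_pow m (r - 1)).comp r ((hasDerivAt_id' r).sub_const 1)
  rwa [mul_one] at h

noncomputable def phiProfile (p r : ℝ) : ℝ := (1 + (r - 1)⁺ ^ 4) ^ (-(p / 4))

noncomputable def phiProfileDeriv (p r : ℝ) : ℝ :=
  -p * (1 + (r - 1)⁺ ^ 4) ^ (-(p / 4) - 1) * (r - 1)⁺ ^ 3

noncomputable def phiProfileDeriv2 (p r : ℝ) : ℝ :=
  p * (p + 4) * (1 + (r - 1)⁺ ^ 4) ^ (-(p / 4) - 2) * (r - 1)⁺ ^ 6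
    - 3 * p * (1 + (r - 1)⁺ ^ 4) ^ (-(p / 4) - 1) * (r - 1)⁺ ^ 2

theorem hasDerivAt_phiProfile (p r : ℝ) :
    HasDerivAt (phiProfile p) (phiProfileDeriv p r) r := by
  have h := ((hasDerivAt_posPart_sub_one_pow 2 r).const_add 1).rpow_const (p := -(p / 4))
    (Or.inl (by positivity))
  exact h.congr_deriv (by unfold phiProfileDeriv; norm_num; ring)

theorem hasDerivAt_phiProfileDeriv (p r : ℝ) :
    HasDerivAt (phiProfileDeriv p) (phiProfileDeriv2 p r) r := by
  have hA := ((hasDerivAt_posPart_sub_one_pow 2 r).const_add 1).rpow_const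
    (p := -(p / 4) - 1) (Or.inl (by positivity))
  have h := (hA.const_mul (-p)).mul (hasDerivAt_posPart_sub_one_pow 1 r)
  exact h.congr_deriv (by
    unfold phiProfileDeriv2
    rw [show -(p / 4) - 1 - 1 = -(p / 4) - 2 by ring]
    norm_num
    ring)

theorem rpow_mul_pow_le_of_pow_four_le {A t a b : ℝ} (k : ℕ) (hA : 0 < A) (ht : 0 ≤ t)
    (htA : t ^ 4 ≤ A) (hab : b + k / 4 = a) : A ^ b * t ^ k ≤ A ^ a := by
  have hroot : t ≤ A ^ ((4 : ℕ)⁻¹ : ℝ) := by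
    calc t = (t ^ 4) ^ ((4 : ℕ)⁻¹ : ℝ) := (pow_rpow_inv_natCast ht (by norm_num)).symm
      _ ≤ A ^ ((4 : ℕ)⁻¹ : ℝ) := rpow_le_rpow (by positivity) htA (by positivity)
  calc A ^ b * t ^ k ≤ A ^ b * (A ^ ((4 : ℕ)⁻¹ : ℝ)) ^ k := by gcongr
    _ = A ^ a := by rw [← rpow_mul_natCast hA.le, ← rpow_add hA, ← hab]; push_cast; ring_nf

theorem abs_phiProfileDeriv2_add_le {p r : ℝ} (hp : 0 ≤ p) (hr : 1 ≤ r) (c : ℝ) :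
    |phiProfileDeriv2 p r + c * phiProfileDeriv p r / r|
      ≤ (p * (p + 4) + 3 * p + |c| * p) * (1 + (r - 1) ^ 4) ^ ((-p - 2) / 4) := by
  have ht : 0 ≤ r - 1 := by linarith
  rw [phiProfileDeriv2, phiProfileDeriv, posPart_eq_self.2 ht]
  set t := r - 1
  set A := 1 + t ^ 4
  set Q := A ^ ((-p - 2) / 4)
  have hA : 0 < A := by positivity
  have htA : t ^ 4 ≤ A := le_add_of_nonneg_left zero_le_one
  have e6 : A ^ (-(p / 4) - 2) * t ^ 6 ≤ Q :=
    rpow_mul_pow_le_of_pow_four_le 6 hA ht htA (by push_cast; ring)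
  have e2 : A ^ (-(p / 4) - 1) * t ^ 2 ≤ Q :=
    rpow_mul_pow_le_of_pow_four_le 2 hA ht htA (by push_cast; ring)
  have e3 : A ^ (-(p / 4) - 1) * (t ^ 3 / r) ≤ Q := by
    refine le_trans (mul_le_mul_of_nonneg_left ?_ (by positivity)) e2
    rw [div_le_iff₀ (by linarith)]
    nlinarith [pow_nonneg ht 2]
  have hc : |p * (c * (A ^ (-(p / 4) - 1) * (t ^ 3 / r)))| ≤ p * (|c| * Q) := by
    rw [abs_mul, abs_mul, abs_of_nonneg hp,
      abs_of_nonneg (mul_nonneg (by positivity) (div_nonneg (pow_nonneg ht 3) (by linarith)))]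
    gcongr
  have h6 : p * (p + 4) * (A ^ (-(p / 4) - 2) * t ^ 6) ≤ p * (p + 4) * Q := by gcongr
  have h2 : 3 * p * (A ^ (-(p / 4) - 1) * t ^ 2) ≤ 3 * p * Q := by gcongr
  have h6' : 0 ≤ p * (p + 4) * (A ^ (-(p / 4) - 2) * t ^ 6) := by positivity
  have h2' : 0 ≤ 3 * p * (A ^ (-(p / 4) - 1) * t ^ 2) := by positivity
  calc _ = |p * (p + 4) * (A ^ (-(p / 4) - 2) * t ^ 6) - 3 * p * (A ^ (-(p / 4) - 1) * t ^ 2)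
        - p * (c * (A ^ (-(p / 4) - 1) * (t ^ 3 / r)))| := by congr 1; ring
    _ ≤ _ := by
      rw [abs_le]
      constructor <;> linarith [abs_le.mp hc]

theorem phi_eq_phiProfile (n : ℕ) (s : ℝ) :
    phi n s = fun x => phiProfile ((n : ℝ) + 2 * s) ‖x‖ := by
  ext x
  unfold phi phiProfile jbr
  split_ifs with hx
  · simp [posPart_eq_zero.2 (sub_nonpos.2 hx)]
  · rw [posPart_eq_self.2 (by linarith), ← rpow_mul (by positivity)]
    ring_nf

theorem phi_eventuallyEq_one {n : ℕ} (s : ℝ) {x : EuclideanSpace ℝ (Fin n)} (hx : ‖x‖ < 1) :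
    phi n s =ᶠ[𝓝 x] fun _ => 1 := by
  filter_upwards [(isOpen_lt continuous_norm continuous_const).mem_nhds hx] with y hy
  exact if_pos (le_of_lt hy)

theorem one_le_jbr {n : ℕ} (x : EuclideanSpace ℝ (Fin n)) : 1 ≤ jbr x :=
  one_le_rpow (le_add_of_nonneg_right (by positivity)) (by norm_num)

theorem jbr_rpow {n : ℕ} (x : EuclideanSpace ℝ (Fin n)) (a : ℝ) :
    jbr x ^ a = (1 + (‖x‖ - 1) ^ 4) ^ (a / 4) := by
  rw [jbr, ← rpow_mul (by positivity)]
  ring_nf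

theorem jbr_rpow_sub_two_le_phi {n : ℕ} {s : ℝ} (hs : -1 ≤ s) (x : EuclideanSpace ℝ (Fin n)) :
    jbr x ^ (-((n : ℝ) + 2 * s) - 2) ≤ phi n s x := by
  unfold phi
  split_ifs
  · exact rpow_le_one_of_one_le_of_nonpos (one_le_jbr x) (by linarith [n.cast_nonneg (α := ℝ)])
  · exact rpow_le_rpow_of_exponent_le (one_le_jbr x) (by linarith)

theorem stmt_13_general (n : ℕ) (s : ℝ) (hs : s ∈ Set.Ioc (0 : ℝ) 1) :
    ∃ C : ℝ, 0 < C ∧ ∀ x : EuclideanSpace ℝ (Fin n),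
      |lap n (phi n s) x| ≤ C * jbr x ^ (-((n : ℝ) + 2 * s) - 2) ∧
      |lap n (phi n s) x| ≤ C * phi n s x := by
  set p : ℝ := n + 2 * s
  have hp : 0 < p := by linarith [hs.1, n.cast_nonneg (α := ℝ)]
  have hC : 0 < p * (p + 4) + 3 * p + |(n : ℝ) - 1| * p := by positivity
  refine ⟨_, hC, fun x => ?_⟩
  have hbound :
      |lap n (phi n s) x| ≤ (p * (p + 4) + 3 * p + |(n : ℝ) - 1| * p) * jbr x ^ (-p - 2) := by
    rcases lt_or_ge ‖x‖ 1 with hx | hx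
    · rw [lap_eq_zero_of_eventuallyEq_const (phi_eventuallyEq_one s hx), abs_zero]
      exact mul_nonneg hC.le (rpow_nonneg (zero_le_one.trans (one_le_jbr x)) _)
    · have hx0 : x ≠ 0 := norm_pos_iff.1 (zero_lt_one.trans_le hx)
      rw [phi_eq_phiProfile, lap_comp_norm hx0 (.of_forall (hasDerivAt_phiProfile p))
        (hasDerivAt_phiProfileDeriv p _), jbr_rpow]
      exact abs_phiProfileDeriv2_add_le hp.le hx _
  exact ⟨hbound, hbound.trans (by gcongr; exact jbr_rpow_sub_two_le_phi (by linarith [hs.1]) x)⟩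

/-- For `n ≥ 1` and `s ∈ (0,1]`, there is a constant `C > 0` (depending only on
`n` and `s`) such that `|Δφ(x)| ≤ C ⟨x⟩^{-n-2s-2}` and in particular
`|Δφ(x)| ≤ C φ(x)` for all `x ∈ ℝⁿ`. -/
theorem stmt_13 (n : ℕ) (hn : 1 ≤ n) (s : ℝ) (hs : s ∈ Set.Ioc (0 : ℝ) 1) :
    ∃ C : ℝ, 0 < C ∧ ∀ x : EuclideanSpace ℝ (Fin n),
      |lap n (phi n s) x| ≤ C * jbr x ^ (-((n : ℝ) + 2 * s) - 2) ∧
      |lap n (phi n s) x| ≤ C * phi n s x :=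
  stmt_13_general n s hs
end
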